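/- If A is a data type (in Krivine's sense: |A| ≠ ∅ and every λ-term t ∈ |A| β-reduces to a closed term), then A is an output type. -/
import Mathlib


/-!
Common development: pure λ-calculus in de Bruijn notation, β-reduction,
weak head reduction, types of system F (with type constants), the typing
systems F, F₀ (F without (∀e)) and the simple system S, saturated sets and
interpretations, and the notions of input / output / data types, following
Farkh-Nour, "Les types de données syntaxiques du système F".
-/

namespace FarkhNour

/-- Pure λ-terms, in de Bruijn notation. -/
inductive Trm : Type
  | var : ℕ → Trm
  | app : Trm → Trm → Trm
  | lam : Trm → Trm

/-- Lift (shift) by `d` the free variables of a term, starting at index `k`. -/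
def liftTrm (d : ℕ) : ℕ → Trm → Trm
  | k, .var n => if n < k then .var n else .var (n + d)
  | k, .app a b => .app (liftTrm d k a) (liftTrm d k b)
  | k, .lam a => .lam (liftTrm d (k + 1) a)

/-- β-substitution `t[u/k]` (the binder for `k` is consumed: variables above `k`
are decremented), as used in the β-reduction rule. -/
def substTrm : Trm → ℕ → Trm → Trm
  | .var n, k, u => if n < k then .var n else if n = k then liftTrm k 0 u else .var (n - 1)
  | .app a b, k, u => .app (substTrm a k u) (substTrm b k u)
  | .lam a, k, u => .lam (substTrm a (k + 1) u)

/-- Named-style capture-avoiding substitution `t[u/x]` of the term `u` for the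
free variable `x` of `t` : the other free variables are left unchanged. -/
def replaceVar : Trm → ℕ → Trm → Trm
  | .var n, k, u => if n = k then u else .var n
  | .app a b, k, u => .app (replaceVar a k u) (replaceVar b k u)
  | .lam a, k, u => .lam (replaceVar a (k + 1) (liftTrm 1 0 u))

/-- Lifting of a parallel substitution under a binder. -/
def liftSub (σ : ℕ → Trm) : ℕ → Trm
  | 0 => .var 0
  | n + 1 => liftTrm 1 0 (σ n)

/-- Simultaneous (parallel) capture-avoiding substitution. -/
def msubst (σ : ℕ → Trm) : Trm → Trm
  | .var n => σ n
  | .app a b => .app (msubst σ a) (msubst σ b)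
  | .lam a => .lam (msubst (liftSub σ) a)

/-- One step of β-reduction. -/
inductive BetaStep : Trm → Trm → Prop
  | beta (t u : Trm) : BetaStep (.app (.lam t) u) (substTrm t 0 u)
  | appL {t t' : Trm} (u : Trm) : BetaStep t t' → BetaStep (.app t u) (.app t' u)
  | appR (t : Trm) {u u' : Trm} : BetaStep u u' → BetaStep (.app t u) (.app t u')
  | lam {t t' : Trm} : BetaStep t t' → BetaStep (.lam t) (.lam t')

/-- Many-step β-reduction `t →β t'`. -/
def BetaRed : Trm → Trm → Prop := Relation.ReflTransGen BetaStep

/-- β-equivalence `t ≃β t'`. -/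
def BetaEq : Trm → Trm → Prop := Relation.EqvGen BetaStep

/-- A term is normal iff no β-reduction step applies to it. -/
def IsNormal (t : Trm) : Prop := ∀ u, ¬ BetaStep t u

/-- `FreeIn k t` : the variable (de Bruijn index) `k` occurs free in `t`. -/
def FreeIn : ℕ → Trm → Prop
  | k, .var n => n = k
  | k, .app a b => FreeIn k a ∨ FreeIn k b
  | k, .lam a => FreeIn (k + 1) a

/-- A closed term. -/
def TrmClosed (t : Trm) : Prop := ∀ k, ¬ FreeIn k t

/-- One step of weak head reduction. -/
inductive WHStep : Trm → Trm → Prop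
  | beta (t u : Trm) : WHStep (.app (.lam t) u) (substTrm t 0 u)
  | app {t t' : Trm} (u : Trm) : WHStep t t' → WHStep (.app t u) (.app t' u)

/-- Weak head reduction `t ≻_f t'`. -/
def WHRed : Trm → Trm → Prop := Relation.ReflTransGen WHStep

/-- Types of system F, in de Bruijn notation, with type constants
(the constant `0` is the distinguished constant `O`, the constant `1` is `⊥`). -/
inductive Ty : Type
  | var : ℕ → Ty
  | const : ℕ → Ty
  | arr : Ty → Ty → Ty
  | all : Ty → Ty

/-- The distinguished type constant `O`. -/
def tyO : Ty := .const 0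

/-- The distinguished type constant `⊥`. -/
def tyBot : Ty := .const 1

/-- Lift (shift) by `d` the free type variables, starting at index `k`. -/
def liftTy (d : ℕ) : ℕ → Ty → Ty
  | k, .var n => if n < k then .var n else .var (n + d)
  | _, .const c => .const c
  | k, .arr a b => .arr (liftTy d k a) (liftTy d k b)
  | k, .all a => .all (liftTy d (k + 1) a)

/-- Capture-avoiding type substitution `A[G/k]`. -/
def substTy : Ty → ℕ → Ty → Ty
  | .var n, k, G => if n < k then .var n else if n = k then liftTy k 0 G else .var (n - 1)
  | .const c, _, _ => .const c
  | .arr a b, k, G => .arr (substTy a k G) (substTy b k G)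
  | .all a, k, G => .all (substTy a (k + 1) G)

/-- `TyFreeIn k A` : the type variable `k` occurs free in `A`. -/
def TyFreeIn : ℕ → Ty → Prop
  | k, .var n => n = k
  | _, .const _ => False
  | k, .arr a b => TyFreeIn k a ∨ TyFreeIn k b
  | k, .all a => TyFreeIn (k + 1) a

/-- Boolean version of `TyFreeIn`. -/
def tyFreeInB : ℕ → Ty → Bool
  | k, .var n => n == k
  | _, .const _ => false
  | k, .arr a b => tyFreeInB k a || tyFreeInB k b
  | k, .all a => tyFreeInB (k + 1) a

/-- A closed type. -/
def TyClosed (A : Ty) : Prop := ∀ k, ¬ TyFreeIn k A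

/-- `ContainsConst c A` : the type constant `c` occurs in `A`. -/
def ContainsConst : ℕ → Ty → Prop
  | _, .var _ => False
  | c, .const c' => c' = c
  | c, .arr a b => ContainsConst c a ∨ ContainsConst c b
  | c, .all a => ContainsConst c a

/-- The typing judgment `Γ ⊢_F t : A` of system F, with rules
(ax), (→i), (→e), (∀i), (∀e). -/
inductive TypF : List Ty → Trm → Ty → Prop
  | var (Γ : List Ty) (n : ℕ) (A : Ty) : Γ[n]? = some A → TypF Γ (.var n) A
  | abs {Γ : List Ty} {t : Trm} {B C : Ty} :
      TypF (B :: Γ) t C → TypF Γ (.lam t) (.arr B C)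
  | app {Γ : List Ty} {u v : Trm} {B C : Ty} :
      TypF Γ u (.arr B C) → TypF Γ v B → TypF Γ (.app u v) C
  | allI {Γ : List Ty} {t : Trm} {A : Ty} :
      TypF (Γ.map (liftTy 1 0)) t A → TypF Γ t (.all A)
  | allE {Γ : List Ty} {t : Trm} {A : Ty} (G : Ty) :
      TypF Γ t (.all A) → TypF Γ t (substTy A 0 G)

/-- The typing judgment `Γ ⊢_{F₀} t : A` of system F₀, i.e. system F
without the rule (∀e). -/
inductive TypF0 : List Ty → Trm → Ty → Prop
  | var (Γ : List Ty) (n : ℕ) (A : Ty) : Γ[n]? = some A → TypF0 Γ (.var n) A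
  | abs {Γ : List Ty} {t : Trm} {B C : Ty} :
      TypF0 (B :: Γ) t C → TypF0 Γ (.lam t) (.arr B C)
  | app {Γ : List Ty} {u v : Trm} {B C : Ty} :
      TypF0 Γ u (.arr B C) → TypF0 Γ v B → TypF0 Γ (.app u v) C
  | allI {Γ : List Ty} {t : Trm} {A : Ty} :
      TypF0 (Γ.map (liftTy 1 0)) t A → TypF0 Γ t (.all A)

/-- The typing judgment `Γ ⊢_S t : A` of the simple type system S,
with rules (ax), (→i), (→e) only. -/
inductive TypS : List Ty → Trm → Ty → Prop
  | var (Γ : List Ty) (n : ℕ) (A : Ty) : Γ[n]? = some A → TypS Γ (.var n) A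
  | abs {Γ : List Ty} {t : Trm} {B C : Ty} :
      TypS (B :: Γ) t C → TypS Γ (.lam t) (.arr B C)
  | app {Γ : List Ty} {u v : Trm} {B C : Ty} :
      TypS Γ u (.arr B C) → TypS Γ v B → TypS Γ (.app u v) C

/-- Quantifier-free types (types of the simple type system S). -/
def QFree : Ty → Prop
  | .var _ => True
  | .const _ => True
  | .arr a b => QFree a ∧ QFree b
  | .all _ => False

/-- An input type : a closed type all of whose normal inhabitants are
typable in system F₀. -/
def IsInputType (E : Ty) : Prop :=
  TyClosed E ∧ ∀ t : Trm, IsNormal t → TypF [] t E → TypF0 [] t E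

/-- An output type : a closed type `S` not containing the constant `O` such
that for every normal term `t`, if `α : O ⊢_F t : S` then `α ∉ Fv(t)`. -/
def IsOutputType (S : Ty) : Prop :=
  TyClosed S ∧ ¬ ContainsConst 0 S ∧
    ∀ t : Trm, IsNormal t → TypF [tyO] t S → ¬ FreeIn 0 t

/-- A syntactical data type : a closed type which is both input and output. -/
def IsSyntacticalDataType (D : Ty) : Prop := IsInputType D ∧ IsOutputType D

mutual
  /-- The ∀⁺ types (positive quantifiers). -/
  inductive PosTy : Ty → Prop
    | var (n : ℕ) : PosTy (.var n)
    | arr {B A : Ty} : NegTy B → PosTy A → PosTy (.arr B A)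
    | all {A : Ty} : PosTy A → TyFreeIn 0 A → PosTy (.all A)
  /-- The ∀⁻ types (negative quantifiers). -/
  inductive NegTy : Ty → Prop
    | var (n : ℕ) : NegTy (.var n)
    | arr {B A : Ty} : PosTy B → NegTy A → NegTy (.arr B A)
end

/-- `EndsInConst c A` : the type `A` ends in the type constant `c`. -/
inductive EndsInConst : ℕ → Ty → Prop
  | base (c : ℕ) : EndsInConst c (.const c)
  | arr {c : ℕ} {A : Ty} (B : Ty) : EndsInConst c A → EndsInConst c (.arr B A)
  | all {c : ℕ} {A : Ty} : EndsInConst c A → EndsInConst c (.all A)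

/-- `EndsInVar k A` : the type `A` ends in the type variable `k`
(crossing a quantifier ∀X with X ≠ the variable is allowed). -/
inductive EndsInVar : ℕ → Ty → Prop
  | base (k : ℕ) : EndsInVar k (.var k)
  | arr {k : ℕ} {A : Ty} (B : Ty) : EndsInVar k A → EndsInVar k (.arr B A)
  | all {k : ℕ} {A : Ty} : EndsInVar (k + 1) A → EndsInVar k (.all A)

/-- The side condition of the restricted rule (∀e)_F : the body `A` of `∀X A`
(the variable X having index `k`) is of the form
`∀X₀(A₁ → ∀X₁(A₂ → … → ∀X_{n-1}(A_n → ∀X_n Y)…))` with `Y = X` or one of the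
`A_i` ending in `X`. -/
inductive FFForm : ℕ → Ty → Prop
  | base (k : ℕ) : FFForm k (.var k)
  | all {k : ℕ} {A : Ty} : FFForm (k + 1) A → FFForm k (.all A)
  | arrTail {k : ℕ} {C : Ty} (B : Ty) : FFForm k C → FFForm k (.arr B C)
  | arrHit {k : ℕ} {B C : Ty} : EndsInVar k B → (∃ j, EndsInVar j C) →
      FFForm k (.arr B C)

/-- The typing judgment of system F_F : system F where the rule (∀e) is
replaced by the restricted rule (∀e)_F. -/
inductive TypFF : List Ty → Trm → Ty → Prop
  | var (Γ : List Ty) (n : ℕ) (A : Ty) : Γ[n]? = some A → TypFF Γ (.var n) A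
  | abs {Γ : List Ty} {t : Trm} {B C : Ty} :
      TypFF (B :: Γ) t C → TypFF Γ (.lam t) (.arr B C)
  | app {Γ : List Ty} {u v : Trm} {B C : Ty} :
      TypFF Γ u (.arr B C) → TypFF Γ v B → TypFF Γ (.app u v) C
  | allI {Γ : List Ty} {t : Trm} {A : Ty} :
      TypFF (Γ.map (liftTy 1 0)) t A → TypFF Γ t (.all A)
  | allE {Γ : List Ty} {t : Trm} {A : Ty} (G : Ty) :
      FFForm 0 A → TypFF Γ t (.all A) → TypFF Γ t (substTy A 0 G)

/-- An output type of system F_F. -/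
def IsOutputTypeFF (S : Ty) : Prop :=
  TyClosed S ∧ ¬ ContainsConst 0 S ∧
    ∀ t : Trm, IsNormal t → TypFF [tyO] t S → ¬ FreeIn 0 t

/-- Saturated sets of λ-terms. -/
def Saturated (G : Set Trm) : Prop := ∀ t u : Trm, WHRed t u → u ∈ G → t ∈ G

/-- `G → G'` on sets of λ-terms. -/
def SetArr (G G' : Set Trm) : Set Trm := {u : Trm | ∀ t ∈ G, Trm.app u t ∈ G'}

/-- Extension of an interpretation by a set for the (de Bruijn) variable 0. -/
def consEnv (G : Set Trm) (I : ℕ → Set Trm) : ℕ → Set Trm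
  | 0 => G
  | n + 1 => I n

/-- The value `|A|_I` of a type in an interpretation (`C` interprets the
type constants, `I` the type variables). -/
def TyVal (C : ℕ → Set Trm) : Ty → (ℕ → Set Trm) → Set Trm
  | .var n, I => I n
  | .const c, _ => C c
  | .arr a b, I => SetArr (TyVal C a I) (TyVal C b I)
  | .all a, I => {t : Trm | ∀ G : Set Trm, Saturated G → t ∈ TyVal C a (consEnv G I)}

/-- `|A|` : the intersection of the values of `A` under all interpretations
by saturated sets. -/
def TyGlobal (A : Ty) : Set Trm :=
  {t : Trm | ∀ C I : ℕ → Set Trm, (∀ c, Saturated (C c)) → (∀ n, Saturated (I n)) →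
    t ∈ TyVal C A I}

/-- A data type in Krivine's sense : a closed type `A` with `|A| ≠ ∅` such that
every term of `|A|` β-reduces to a closed term. -/
def IsDataType (A : Ty) : Prop :=
  TyClosed A ∧ TyGlobal A ≠ ∅ ∧
    ∀ t ∈ TyGlobal A, ∃ t' : Trm, BetaRed t t' ∧ TrmClosed t'

/-- The product type `A ∧ B = ∀X((A → (B → X)) → X)` (X fresh). -/
def tyAnd (A B : Ty) : Ty :=
  .all (.arr (.arr (liftTy 1 0 A) (.arr (liftTy 1 0 B) (.var 0))) (.var 0))

/-- The disjoint sum type `A ∨ B = ∀X((A → X) → ((B → X) → X))` (X fresh). -/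
def tyOr (A B : Ty) : Ty :=
  .all (.arr (.arr (liftTy 1 0 A) (.var 0))
    (.arr (.arr (liftTy 1 0 B) (.var 0)) (.var 0)))

/-- The type `LA = ∀X(X → ((A → (X → X)) → X))` of lists of objects of `A`. -/
def tyList (A : Ty) : Ty :=
  .all (.arr (.var 0)
    (.arr (.arr (liftTy 1 0 A) (.arr (.var 0) (.var 0))) (.var 0)))

/-- Negation `¬A = A → ⊥`. -/
def tyNeg (A : Ty) : Ty := .arr A tyBot

/-- The Gödel translation `A*` : every atomic subformula `R` is replaced
by `¬R`. -/
def godel : Ty → Ty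
  | .var n => .arr (.var n) tyBot
  | .const c => .arr (.const c) tyBot
  | .arr a b => .arr (godel a) (godel b)
  | .all a => .all (godel a)

/-- `T` is a storage operator for the pair of types `(E, S)`. -/
def IsStorageOpPair (T : Trm) (E S : Ty) : Prop :=
  TrmClosed T ∧
    ∀ t : Trm, TypF [] t E →
      ∃ τ τ' : Trm, BetaEq τ τ' ∧ TypF [] τ' S ∧
        ∀ θ : Trm, BetaEq θ t →
          ∀ f : ℕ, ¬ FreeIn f θ → ¬ FreeIn f τ →
            ∃ σ : ℕ → Trm,
              WHRed (.app (.app T θ) (.var f)) (.app (.var f) (msubst σ τ))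

/-- `T` is a storage operator for the type `D`. -/
def IsStorageOp (T : Trm) (D : Ty) : Prop := IsStorageOpPair T D D

/-- The term `λx₁…λxₙ.α` (n-fold abstraction over the free variable `α`). -/
def nlam (n a : ℕ) : Trm := Trm.lam^[n] (Trm.var (a + n))

/-- The term `p_n = λx₁…λxₙλx.x`. -/
def pTrm (n : ℕ) : Trm := Trm.lam^[n] (Trm.lam (Trm.var 0))

/-- `B₁ → … → B_n → A`. -/
def mkArr (Bs : List Ty) (A : Ty) : Ty := Bs.foldr Ty.arr A

/-- The length `Lg(E)` of a type : the number of occurrences of `→` in it. -/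
def Lg : Ty → ℕ
  | .var _ => 0
  | .const _ => 0
  | .arr a b => Lg a + Lg b + 1
  | .all a => Lg a

/-- `SubtypeOf A E` : `A` is a subtype (subformula) of `E`. -/
inductive SubtypeOf : Ty → Ty → Prop
  | refl (A : Ty) : SubtypeOf A A
  | arrL {A B C : Ty} : SubtypeOf A B → SubtypeOf A (.arr B C)
  | arrR {A B C : Ty} : SubtypeOf A C → SubtypeOf A (.arr B C)
  | all {A B : Ty} : SubtypeOf A B → SubtypeOf A (.all B)

/-- `InAppPos k t` : the variable `k` occurs in application (function)
position in `t`, i.e. some subterm of `t` is of the form `(k)u`. -/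
def InAppPos : ℕ → Trm → Prop
  | _, .var _ => False
  | k, .app u v => u = .var k ∨ InAppPos k u ∨ InAppPos k v
  | k, .lam u => InAppPos (k + 1) u

/-- The simple translation `A^s` : `X^s = X`, `(B → C)^s = B^s → C^s`,
`(∀X B)^s = B^s` (the variables freed by erasing the quantifiers are collapsed
onto the type variable `0`). `d` counts the erased quantifiers. -/
def eraseTyAux : ℕ → Ty → Ty
  | d, .var n => .var (n - d)
  | _, .const c => .const c
  | d, .arr a b => .arr (eraseTyAux d a) (eraseTyAux d b)
  | d, .all a => eraseTyAux (d + 1) a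

/-- The simple translation `A^s`. -/
def eraseTy : Ty → Ty := eraseTyAux 0

/-- The identity term `λx.x`. -/
def idTrm : Trm := .lam (.var 0)

/-- The boolean `𝟙 = λxλy.x`. -/
def oneTrm : Trm := .lam (.lam (.var 1))

/-- The pair of λ-terms `(T_F, T'_F)` associated with a type `F` (the
distinguished variable `X` having de Bruijn index `k`; the term variable `α`
is the free term variable `0`):
`T_F = T'_F = λx.x` if `X ∉ Fv(F)`;
`T_X = λxλβλg.(g)xα`, `T'_X = λx.(x)α𝟙`;
`T_{C→D} = λxλy.(T_D)(x)(T'_C)y`, `T'_{C→D} = λxλy.(T'_D)(x)(T_C)y`;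
`T_{∀Y B} = λx.(T_B)x`, `T'_{∀Y B} = λx.(T'_B)x`. -/
def TTpair : ℕ → Ty → Trm × Trm
  | k, .var n =>
      if n = k then
        (.lam (.lam (.lam (.app (.app (.var 0) (.var 2)) (.var 3)))),
         .lam (.app (.app (.var 0) (.var 1)) oneTrm))
      else (idTrm, idTrm)
  | _, .const _ => (idTrm, idTrm)
  | k, .arr C D =>
      if tyFreeInB k (.arr C D) then
        (.lam (.lam (.app (liftTrm 2 0 (TTpair k D).1)
            (.app (.var 1) (.app (liftTrm 2 0 (TTpair k C).2) (.var 0))))),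
         .lam (.lam (.app (liftTrm 2 0 (TTpair k D).2)
            (.app (.var 1) (.app (liftTrm 2 0 (TTpair k C).1) (.var 0))))))
      else (idTrm, idTrm)
  | k, .all B =>
      if tyFreeInB k (.all B) then
        (.lam (.app (liftTrm 1 0 (TTpair (k + 1) B).1) (.var 0)),
         .lam (.app (liftTrm 1 0 (TTpair (k + 1) B).2) (.var 0)))
      else (idTrm, idTrm)


/-! ### Auxiliary development for Statement 5 -/

theorem liftTrm_zero (t : Trm) : ∀ k, liftTrm 0 k t = t := by
  induction t with
  | var n => intro k; simp [liftTrm]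
  | app a b iha ihb => intro k; simp [liftTrm, iha, ihb]
  | lam a ih => intro k; simp [liftTrm, ih]

theorem liftTrm_liftTrm (a b : ℕ) (t : Trm) :
    ∀ k, liftTrm a k (liftTrm b k t) = liftTrm (a + b) k t := by
  induction t with
  | var n =>
    intro k
    by_cases h : n < k
    · simp [liftTrm, h]
    · have h2 : ¬ n + b < k := by omega
      simp [liftTrm, h, h2]
      omega
  | app u v ihu ihv => intro k; simp [liftTrm, ihu, ihv]
  | lam u ih => intro k; simp [liftTrm, ih]

theorem substTrm_liftTrm (d : ℕ) (u : Trm) (t : Trm) :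
    ∀ k m, k ≤ m → m ≤ k + d → substTrm (liftTrm (d + 1) k t) m u = liftTrm d k t := by
  induction t with
  | var n =>
    intro k m h1 h2
    by_cases h : n < k
    · have h' : n < m := by omega
      simp [liftTrm, substTrm, h, h']
    · have h3 : ¬ n + (d + 1) < m := by omega
      have h4 : ¬ n + (d + 1) = m := by omega
      simp [liftTrm, substTrm, h, h3, h4]
  | app a b iha ihb =>
    intro k m h1 h2; simp [liftTrm, substTrm, iha k m h1 h2, ihb k m h1 h2]
  | lam a ih =>
    intro k m h1 h2
    simp [liftTrm, substTrm, ih (k+1) (m+1) (by omega) (by omega)]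

/-- `scons u σ` : cons a term onto a parallel substitution. -/
def scons (u : Trm) (σ : ℕ → Trm) : ℕ → Trm
  | 0 => u
  | n + 1 => σ n

theorem liftSub_iterate (j : ℕ) (τ : ℕ → Trm) (n : ℕ) :
    (liftSub^[j] τ) n = if n < j then .var n else liftTrm j 0 (τ (n - j)) := by
  induction j generalizing τ n with
  | zero => simp [liftTrm_zero]
  | succ j ih =>
    rw [Function.iterate_succ_apply, ih (liftSub τ) n]
    by_cases h : n < j
    · simp [h, show n < j + 1 by omega]
    · simp only [h, if_false]
      by_cases h2 : n = j
      · subst h2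
        simp [liftSub, show n < n + 1 by omega, liftTrm]
      · have h3 : ¬ n < j + 1 := by omega
        simp only [h3, if_false]
        have h4 : n - j = (n - (j+1)) + 1 := by omega
        rw [h4]
        simp only [liftSub]
        rw [liftTrm_liftTrm]

theorem substTrm_msubst_aux (u : Trm) (σ : ℕ → Trm) (t : Trm) :
    ∀ j, substTrm (msubst (liftSub^[j+1] σ) t) j u
      = msubst (liftSub^[j] (scons u σ)) t := by
  induction t with
  | var n =>
    intro j
    simp only [msubst]
    rw [liftSub_iterate, liftSub_iterate]
    by_cases h : n < j
    · simp [h, show n < j + 1 by omega, substTrm]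
    · simp only [h, if_false]
      by_cases h2 : n = j
      · subst h2
        simp [show n < n + 1 by omega, substTrm, scons, liftTrm_zero]
      · have h3 : ¬ n < j + 1 := by omega
        simp only [h3, if_false]
        have h4 : n - j = (n - (j+1)) + 1 := by omega
        rw [h4]
        simp only [scons]
        rw [substTrm_liftTrm j u _ 0 j (by omega) (by omega)]
  | app a b iha ihb =>
    intro j; simp only [msubst, substTrm, iha j, ihb j]
  | lam a ih =>
    intro j
    simp only [msubst, substTrm]
    rw [← Function.iterate_succ_apply' liftSub, ← Function.iterate_succ_apply' liftSub,
      ih (j+1)]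

theorem substTrm_msubst (u : Trm) (σ : ℕ → Trm) (t : Trm) :
    substTrm (msubst (liftSub σ) t) 0 u = msubst (scons u σ) t := by
  have := substTrm_msubst_aux u σ t 0
  simpa using this

theorem msubst_var (t : Trm) : ∀ σ : ℕ → Trm, (∀ n, σ n = .var n) → msubst σ t = t := by
  induction t with
  | var n => intro σ h; simp [msubst, h]
  | app a b iha ihb => intro σ h; simp [msubst, iha σ h, ihb σ h]
  | lam a ih =>
    intro σ h
    simp only [msubst]
    rw [ih]
    intro n
    cases n with
    | zero => rfl
    | succ m => simp [liftSub, h, liftTrm]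

theorem whred_appL {t t' : Trm} (u : Trm) (h : WHRed t t') :
    WHRed (.app t u) (.app t' u) := by
  induction h with
  | refl => exact Relation.ReflTransGen.refl
  | tail _ h2 ih => exact Relation.ReflTransGen.tail ih (WHStep.app u h2)

theorem consEnv_sat {G : Set Trm} {I : ℕ → Set Trm} (hG : Saturated G)
    (hI : ∀ n, Saturated (I n)) : ∀ n, Saturated (consEnv G I n) := by
  intro n; cases n with
  | zero => exact hG
  | succ m => exact hI m

theorem tyVal_saturated (C : ℕ → Set Trm) (A : Ty) :
    ∀ I : ℕ → Set Trm, (∀ c, Saturated (C c)) → (∀ n, Saturated (I n)) →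
      Saturated (TyVal C A I) := by
  induction A with
  | var n => intro I hC hI; exact hI n
  | const c => intro I hC hI; exact hC c
  | arr a b iha ihb =>
    intro I hC hI t u hred hu s hs
    exact ihb I hC hI (.app t s) (.app u s) (whred_appL s hred) (hu s hs)
  | all a ih =>
    intro I hC hI t u hred hu G hG
    exact ih (consEnv G I) hC (consEnv_sat hG hI) t u hred (hu G hG)

theorem tyVal_ext (C : ℕ → Set Trm) (A : Ty) {I J : ℕ → Set Trm}
    (h : ∀ n, I n = J n) : TyVal C A I = TyVal C A J := by
  rw [funext h]

theorem tyVal_liftTy (C : ℕ → Set Trm) (d : ℕ) (A : Ty) :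
    ∀ (k : ℕ) (I : ℕ → Set Trm),
      TyVal C (liftTy d k A) I = TyVal C A (fun n => if n < k then I n else I (n + d)) := by
  induction A with
  | var n =>
    intro k I; by_cases h : n < k <;> simp [liftTy, TyVal, h]
  | const c => intro k I; simp [liftTy, TyVal]
  | arr a b iha ihb =>
    intro k I; simp only [liftTy, TyVal, iha, ihb]
  | all a ih =>
    intro k I
    simp only [liftTy, TyVal]
    ext t
    simp only [Set.mem_setOf_eq]
    constructor <;> intro h G hG
    · have := h G hG
      rw [ih (k+1) (consEnv G I)] at this
      refine (tyVal_ext C a (fun n => ?_)) ▸ this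
      cases n with
      | zero => simp [consEnv]
      | succ m =>
        by_cases hm : m < k
        · simp [consEnv, hm, show m + 1 < k + 1 by omega]
        · simp [consEnv, hm, show ¬ m + 1 < k + 1 by omega, Nat.add_right_comm]
    · have := h G hG
      rw [ih (k+1) (consEnv G I)]
      refine (tyVal_ext C a (fun n => ?_)) ▸ this
      cases n with
      | zero => simp [consEnv]
      | succ m =>
        by_cases hm : m < k
        · simp [consEnv, hm, show m + 1 < k + 1 by omega]
        · simp [consEnv, hm, show ¬ m + 1 < k + 1 by omega, Nat.add_right_comm]

theorem tyVal_substTy (C : ℕ → Set Trm) (G : Ty) (A : Ty) :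
    ∀ (k : ℕ) (I : ℕ → Set Trm),
      TyVal C (substTy A k G) I
        = TyVal C A (fun n => if n < k then I n
            else if n = k then TyVal C G (fun m => I (m + k)) else I (n - 1)) := by
  induction A with
  | var n =>
    intro k I
    by_cases h : n < k
    · simp [substTy, TyVal, h]
    · by_cases h2 : n = k
      · subst h2
        have e : substTy (Ty.var n) n G = liftTy n 0 G := by simp [substTy]
        rw [e, tyVal_liftTy C n G 0 I]
        have e2 : TyVal C (Ty.var n) (fun m => if m < n then I m
            else if m = n then TyVal C G (fun m => I (m + n)) else I (m - 1))
            = TyVal C G (fun m => I (m + n)) := by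
          simp [TyVal, h]
        rw [e2]
        exact tyVal_ext C G (fun m => by simp)
      · simp [substTy, TyVal, h, h2]
  | const c => intro k I; simp [substTy, TyVal]
  | arr a b iha ihb =>
    intro k I; simp only [substTy, TyVal, iha, ihb]
  | all a ih =>
    intro k I
    simp only [substTy, TyVal]
    ext t
    simp only [Set.mem_setOf_eq]
    have key : ∀ G' : Set Trm,
        (fun n => if n < k + 1 then consEnv G' I n
          else if n = k + 1 then TyVal C G (fun m => consEnv G' I (m + (k+1)))
          else consEnv G' I (n - 1))
        = consEnv G' (fun n => if n < k then I n
            else if n = k then TyVal C G (fun m => I (m + k)) else I (n - 1)) := by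
      intro G'
      funext n
      cases n with
      | zero => simp [consEnv]
      | succ m =>
        show (if m + 1 < k + 1 then consEnv G' I (m+1)
          else if m + 1 = k + 1 then TyVal C G (fun p => consEnv G' I (p + (k+1)))
          else consEnv G' I (m + 1 - 1))
          = (if m < k then I m else if m = k then TyVal C G (fun p => I (p + k)) else I (m - 1))
        by_cases hm : m < k
        · rw [if_pos (by omega : m + 1 < k + 1), if_pos hm]
          simp [consEnv]
        · by_cases hm2 : m = k
          · rw [if_neg (by omega : ¬ m + 1 < k + 1), if_pos (by omega : m + 1 = k + 1),
              if_neg hm, if_pos hm2]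
            refine tyVal_ext C G (fun p => ?_)
            have hp : p + (k + 1) = (p + k) + 1 := by omega
            rw [hp]
            simp [consEnv]
          · rw [if_neg (by omega : ¬ m + 1 < k + 1), if_neg (by omega : ¬ m + 1 = k + 1),
              if_neg hm, if_neg hm2]
            obtain ⟨p, rfl⟩ : ∃ p, m = p + 1 := ⟨m - 1, by omega⟩
            show consEnv G' I (p + 1 + 1 - 1) = I (p + 1 - 1)
            have hq : p + 1 + 1 - 1 = p + 1 := by omega
            rw [hq]
            simp [consEnv]
    constructor <;> intro h G' hG'
    · have := h G' hG'
      rw [ih (k+1) (consEnv G' I), key G'] at this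
      exact this
    · have := h G' hG'
      rw [ih (k+1) (consEnv G' I), key G']
      exact this

theorem tyVal_const_indep (C : ℕ → Set Trm) (A : Ty) (hA : ¬ ContainsConst 0 A) :
    ∀ I : ℕ → Set Trm,
      TyVal (fun c => if c = 0 then Set.univ else C c) A I = TyVal C A I := by
  induction A with
  | var n => intro I; rfl
  | const c =>
    intro I
    have : c ≠ 0 := fun h => hA (by simp [ContainsConst, h])
    simp [TyVal, this]
  | arr a b iha ihb =>
    intro I
    have h1 : ¬ ContainsConst 0 a := fun h => hA (Or.inl h)
    have h2 : ¬ ContainsConst 0 b := fun h => hA (Or.inr h)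
    simp only [TyVal, iha h1, ihb h2]
  | all a ih =>
    intro I
    have h1 : ¬ ContainsConst 0 a := hA
    simp only [TyVal]
    ext t
    simp only [Set.mem_setOf_eq]
    constructor <;> intro h G hG
    · rw [← ih h1 (consEnv G I)]; exact h G hG
    · rw [ih h1 (consEnv G I)]; exact h G hG

/-- Adequacy : soundness of system F typing w.r.t. saturated interpretations. -/
theorem adequacy {Γ : List Ty} {t : Trm} {A : Ty} (h : TypF Γ t A) :
    ∀ (C I : ℕ → Set Trm), (∀ c, Saturated (C c)) → (∀ n, Saturated (I n)) →
      ∀ σ : ℕ → Trm, (∀ n B, Γ[n]? = some B → σ n ∈ TyVal C B I) →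
        msubst σ t ∈ TyVal C A I := by
  induction h with
  | var Γ n A hn =>
    intro C I hC hI σ hσ
    exact hσ n A hn
  | abs h ih =>
    rename_i Γ t B B'
    intro C I hC hI σ hσ
    intro s hs
    have hred : WHRed (.app (msubst σ (.lam t)) s) (msubst (scons s σ) t) := by
      have : msubst σ (.lam t) = .lam (msubst (liftSub σ) t) := rfl
      rw [this]
      rw [← substTrm_msubst s σ t]
      exact Relation.ReflTransGen.single (WHStep.beta _ _)
    refine tyVal_saturated C B' I hC hI _ _ hred ?_
    apply ih C I hC hI (scons s σ)
    intro n B'' hn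
    cases n with
    | zero =>
      simp only [List.getElem?_cons_zero, Option.some.injEq] at hn
      subst hn; exact hs
    | succ m =>
      simp only [List.getElem?_cons_succ] at hn
      exact hσ m B'' hn
  | app hu hv ihu ihv =>
    intro C I hC hI σ hσ
    exact ihu C I hC hI σ hσ _ (ihv C I hC hI σ hσ)
  | allI h ih =>
    rename_i Γ t A
    intro C I hC hI σ hσ
    intro G hG
    apply ih C (consEnv G I) hC (consEnv_sat hG hI) σ
    intro n B' hn
    simp only [List.getElem?_map] at hn
    cases hB : Γ[n]? with
    | none => rw [hB] at hn; simp at hn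
    | some B =>
      rw [hB] at hn
      simp only [Option.map_some, Option.some.injEq] at hn
      subst hn
      rw [tyVal_liftTy C 1 B 0 (consEnv G I)]
      have := hσ n B hB
      refine (tyVal_ext C B (fun n => ?_)) ▸ this
      simp [consEnv]
  | allE G h ih =>
    rename_i Γ t A
    intro C I hC hI σ hσ
    have hall := ih C I hC hI σ hσ
    have hGsat : Saturated (TyVal C G I) := tyVal_saturated C G I hC hI
    have := hall (TyVal C G I) hGsat
    rw [tyVal_substTy C G A 0 I]
    have e : TyVal C A (consEnv (TyVal C G I) I)
        = TyVal C A (fun n => if n < 0 then I n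
            else if n = 0 then TyVal C G (fun m => I (m + 0)) else I (n - 1)) := by
      refine tyVal_ext C A (fun n => ?_)
      cases n with
      | zero =>
        show TyVal C G I = _
        rw [if_neg (by omega : ¬ (0:ℕ) < 0), if_pos rfl]
        exact tyVal_ext C G (fun m => by simp)
      | succ m => simp [consEnv]
    exact e ▸ this

theorem normal_betaRed {t t' : Trm} (hnf : IsNormal t) (h : BetaRed t t') : t' = t := by
  induction h with
  | refl => rfl
  | tail hr hs ih =>
    subst ih
    exact absurd hs (hnf _)

/-- a data type (in Krivine's sense) is an output type. -/
theorem data_type_is_output_type (A : Ty) (hO : ¬ ContainsConst 0 A)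
    (hA : IsDataType A) : IsOutputType A := by
  obtain ⟨hclosed, -, hred⟩ := hA
  refine ⟨hclosed, hO, ?_⟩
  intro t hnf hty hfree
  have hglob : t ∈ TyGlobal A := by
    intro C I hC hI
    have hstep : msubst Trm.var t ∈ TyVal (fun c => if c = 0 then Set.univ else C c) A I := by
      apply adequacy hty _ I ?_ hI Trm.var ?_
      · intro c
        by_cases h : c = 0
        · simp only [h, if_pos rfl]
          intro a b _ _; trivial
        · simp only [h, if_neg h]
          exact hC c
      · intro n B hn
        cases n with
        | zero =>
          simp only [List.getElem?_cons_zero, Option.some.injEq] at hn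
          subst hn
          show Trm.var 0 ∈ (fun c => if c = 0 then Set.univ else C c) 0
          simp
        | succ m => simp at hn
    rw [msubst_var t Trm.var (fun n => rfl)] at hstep
    rw [tyVal_const_indep C A hO I] at hstep
    exact hstep
  obtain ⟨t', ht', hcl⟩ := hred t hglob
  rw [normal_betaRed hnf ht'] at hcl
  exact hcl 0 hfree

end FarkhNour
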